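/- Let f be a germ at 0 of an analytic function on K^n of finite codimension. If a k-form α with 2 ≤ k ≤ n−1 satisfies dα = 0 and df∧α = 0, then there exists a (k−2)-form γ such that α = df∧dγ. -/

import Mathlib

/-!
Divide `α` by `df`: `α = df ∧ β`. Then `0 = dα = -df ∧ dβ`, so dividing once more gives
`dβ = df ∧ μ`, and Malgrange's theorem writes `β = dγ + df ∧ ν`. Hence
`α = df ∧ dγ + df ∧ df ∧ ν = df ∧ dγ`, the last term vanishing by antisymmetry of the wedge
product (which is where characteristic zero enters).
-/

theorem wedge_wedge_self_eq_zero {K : Type*} [Field K] [CharZero K] {Ω : ℕ → Type*}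
    [∀ k, AddCommGroup (Ω k)] [∀ k, Module K (Ω k)]
    (w : ∀ k, Ω 1 →ₗ[K] Ω k →ₗ[K] Ω (k + 1))
    (hww : ∀ (k : ℕ) (β γ : Ω 1) (α : Ω k), w (k + 1) β (w k γ α) = - w (k + 1) γ (w k β α))
    (k : ℕ) (θ : Ω 1) (α : Ω k) : w (k + 1) θ (w k θ α) = 0 :=
  have := IsAddTorsionFree.of_isTorsionFree K (Ω (k + 2))
  self_eq_neg.mp (hww k θ θ α)

theorem nambu_div_closed_general
    (K : Type) [Field K] [CharZero K] (n : ℕ)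
    (F : Type) [CommRing F] [Algebra K F]
    (Ω : ℕ → Type) [∀ k, AddCommGroup (Ω k)] [∀ k, Module K (Ω k)]
    (d : ∀ k, Ω k →ₗ[K] Ω (k + 1))
    (dF : F →ₗ[K] Ω 1)
    (w : ∀ k, Ω 1 →ₗ[K] Ω k →ₗ[K] Ω (k + 1))
    (hww : ∀ (k : ℕ) (β γ : Ω 1) (α : Ω k), w (k + 1) β (w k γ α) = - w (k + 1) γ (w k β α))
    (hd_w : ∀ (k : ℕ) (g : F) (α : Ω k), d (k + 1) (w k (dF g) α) = - w (k + 1) (dF g) (d k α))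
    (f : F)
    (hdiv : ∀ (k : ℕ) (α : Ω (k + 1)), k + 1 ≤ n - 1 → w (k + 1) (dF f) α = 0 →
      ∃ β : Ω k, α = w k (dF f) β)
    (hMal : ∀ (k : ℕ) (β μ : Ω (k + 1)), k + 2 < n → d (k + 1) β = w (k + 1) (dF f) μ →
      ∃ γ ν : Ω k, β = d k γ + w k (dF f) ν) :
    ∀ (k : ℕ) (α : Ω (k + 2)), k + 2 ≤ n - 1 → d (k + 2) α = 0 →
      w (k + 2) (dF f) α = 0 → ∃ γ : Ω k, α = w (k + 1) (dF f) (d k γ) := by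
  intro k α hk hdα hwα
  obtain ⟨β, rfl⟩ := hdiv (k + 1) α hk hwα
  have hwdβ : w (k + 2) (dF f) (d (k + 1) β) = 0 := by
    rw [← neg_eq_zero, ← hd_w, hdα]
  obtain ⟨μ, hμ⟩ := hdiv (k + 1) (d (k + 1) β) hk hwdβ
  obtain ⟨γ, ν, rfl⟩ := hMal k β μ (by omega) hμ
  refine ⟨γ, ?_⟩
  rw [map_add, wedge_wedge_self_eq_zero w hww, add_zero]

/-- (analytic case) if a `k`-form `α` (`2 ≤ k ≤ n - 1`) satisfies
`dα = 0` and `df ∧ α = 0`, then `α = df ∧ dγ` for some `(k-2)`-form `γ`.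
The de Rham division lemma `hdiv` and Malgrange's relative-cohomology result
`hMal` (both consequences of finite codimension of `f`) are available.
Degrees are shifted: a `k`-form with `k = m + 2` lives in `Ω (m + 2)`. -/
theorem nambu_div_closed
    (K : Type) [Field K] [CharZero K] (n : ℕ) (hn : 3 ≤ n)
    (F : Type) [CommRing F] [Algebra K F]
    (Ω : ℕ → Type) [∀ k, AddCommGroup (Ω k)] [∀ k, Module K (Ω k)]
    [∀ k, Module F (Ω k)] [∀ k, IsScalarTower K F (Ω k)]
    (d : ∀ k, Ω k →ₗ[K] Ω (k + 1))
    (dF : F →ₗ[K] Ω 1)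
    (w : ∀ k, Ω 1 →ₗ[K] Ω k →ₗ[K] Ω (k + 1))
    (hdd : ∀ (k : ℕ) (α : Ω k), d (k + 1) (d k α) = 0)
    (hddF : ∀ g : F, d 1 (dF g) = 0)
    (hdF_mul : ∀ g h : F, dF (g * h) = g • dF h + h • dF g)
    (hd_smul : ∀ (k : ℕ) (g : F) (α : Ω k), d k (g • α) = g • d k α + w k (dF g) α)
    (hw_smul_left : ∀ (k : ℕ) (g : F) (β : Ω 1) (α : Ω k), w k (g • β) α = g • w k β α)
    (hw_smul_right : ∀ (k : ℕ) (g : F) (β : Ω 1) (α : Ω k), w k β (g • α) = g • w k β α)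
    (hww : ∀ (k : ℕ) (β γ : Ω 1) (α : Ω k), w (k + 1) β (w k γ α) = - w (k + 1) γ (w k β α))
    (hd_w : ∀ (k : ℕ) (g : F) (α : Ω k), d (k + 1) (w k (dF g) α) = - w (k + 1) (dF g) (d k α))
    (f : F) (N : ℕ) (hN : 0 < N)
    (ev0 : F →+* K) (hf0 : ev0 f = 0)
    (hreg : ∀ g : F, f * g = 0 → g = 0)
    (hconst : ∀ g : F, dF g = 0 → g = algebraMap K F (ev0 g))
    (hdiv : ∀ (k : ℕ) (α : Ω (k + 1)), k + 1 ≤ n - 1 → w (k + 1) (dF f) α = 0 →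
      ∃ β : Ω k, α = w k (dF f) β)
    (hMal : ∀ (k : ℕ) (β μ : Ω (k + 1)), k + 2 < n → d (k + 1) β = w (k + 1) (dF f) μ →
      ∃ γ ν : Ω k, β = d k γ + w k (dF f) ν) :
    ∀ (k : ℕ) (α : Ω (k + 2)), k + 2 ≤ n - 1 → d (k + 2) α = 0 →
      w (k + 2) (dF f) α = 0 → ∃ γ : Ω k, α = w (k + 1) (dF f) (d k γ) :=
  nambu_div_closed_general K n F Ω d dF w hww hd_w f hdiv hMal
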